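/- For ℓ ≥ 1, let the collar X_ℓ of length ℓ with end vertices u, v be the graph with vertex set {u, v} ∪ {a_i, b_i, c_i, d_i : 1 ≤ i ≤ ℓ}, whose edges are: all six edges among {a_i, b_i, c_i, d_i} for each i (so each quadruple induces a K₄), the edges b_i a_{i+1} for 1 ≤ i < ℓ, the edge u a_1, and the edge b_ℓ v. Then: (1) X_ℓ has exactly one perfect matching; (2) neither X_ℓ − u nor X_ℓ − v has a perfect matching; (3) X_ℓ − {u, v} has exactly 3^ℓ perfect matchings. -/

import Mathlib

/-!
A perfect matching is encoded by the map `g` sending each vertex to its partner, a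
fixed-point-free involution along edges. In a quadruple `{a_i, b_i, c_i, d_i}` the vertices `c_i`
and `d_i` have no neighbours outside it, so by parity `a_i` is matched out of the quadruple iff
`b_i` is, and then `c_i` is matched with `d_i`. In `X_ℓ` the leaf `u` forces `a_1` out, which
propagates along the edges `b_i a_{i+1}` and pins down the whole matching. In `X_ℓ − {u, v}` it is
`b_ℓ` that cannot leave its quadruple, and this propagates backwards: every quadruple is matched
internally, by one of the three perfect matchings of `K₄`. Deleting only `u` or only `v` leaves
`4ℓ + 1` vertices.
-/

open SimpleGraph

/-- `M` is (the edge set of) a perfect matching of `G`: a set of pairwise disjoint edges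
of `G` covering every vertex. -/
def IsPerfectMatchingSet {V : Type*} (G : SimpleGraph V) (M : Set (Sym2 V)) : Prop :=
  M ⊆ G.edgeSet ∧ (∀ e ∈ M, ∀ f ∈ M, e ≠ f → ∀ x, x ∈ e → x ∉ f) ∧
    ∀ v : V, ∃ e ∈ M, v ∈ e

/-- The collar `X_ℓ` of length `ℓ` with end vertices `u = Sum.inl 0` and `v = Sum.inl 1`:
`ℓ` copies of `K₄` on the quadruples `{(i,0),(i,1),(i,2),(i,3)}` (with `a_i = (i,0)` and
`b_i = (i,1)`), the connecting edges `b_i a_{i+1}`, and the edges `u a_1` and `b_ℓ v`. -/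
def collar (ℓ : ℕ) : SimpleGraph (Fin 2 ⊕ (Fin ℓ × Fin 4)) :=
  SimpleGraph.fromRel (fun x y =>
    (∃ (i : Fin ℓ) (a b : Fin 4), a ≠ b ∧ x = Sum.inr (i, a) ∧ y = Sum.inr (i, b)) ∨
    (∃ (i j : Fin ℓ), (i : ℕ) + 1 = (j : ℕ) ∧ x = Sum.inr (i, 1) ∧ y = Sum.inr (j, 0)) ∨
    (∃ j : Fin ℓ, (j : ℕ) = 0 ∧ x = Sum.inl 0 ∧ y = Sum.inr (j, 0)) ∨
    (∃ j : Fin ℓ, (j : ℕ) = ℓ - 1 ∧ x = Sum.inr (j, 1) ∧ y = Sum.inl 1))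

namespace SimpleGraph

variable {V W : Type*} {G : SimpleGraph V} {H : SimpleGraph W} {g : V → V}

def IsMatchingInvolution (G : SimpleGraph V) (g : V → V) : Prop :=
  Function.Involutive g ∧ ∀ x, G.Adj x (g x)

namespace IsMatchingInvolution

variable (hg : G.IsMatchingInvolution g)
include hg

theorem apply_eq_of_apply_eq {x y : V} (h : g x = y) : g y = x := h ▸ hg.1 x

theorem apply_ne_self (x : V) : g x ≠ x := (hg.2 x).ne'

theorem even_card [Fintype V] : Even (Fintype.card V) := by
  classical
  let f : Function.End V := g
  have hfix : Function.fixedPoints f = ∅ := Set.eq_empty_of_forall_notMem hg.apply_ne_self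
  have := Equiv.Perm.card_fixedPoints_modEq (f := f) (p := 2) (n := 1) (funext hg.1)
  simp only [hfix, Set.card_empty] at this
  exact even_iff_two_dvd.2 (Nat.modEq_zero_iff_dvd.1 this)

theorem map_iso (e : G ≃g H) : H.IsMatchingInvolution (e ∘ g ∘ e.symm) := by
  refine ⟨fun x => by simp [hg.1 _], fun x => ?_⟩
  simpa using e.map_adj_iff.2 (hg.2 (e.symm x))

theorem isPerfectMatchingSet_range : IsPerfectMatchingSet G (Set.range fun x => s(x, g x)) := by
  have hmem : ∀ x z : V, z ∈ s(x, g x) → s(x, g x) = s(z, g z) := by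
    intro x z hz
    rcases Sym2.mem_iff.1 hz with rfl | rfl
    · rfl
    · rw [hg.1 x, Sym2.eq_swap]
  refine ⟨?_, ?_, fun x => ⟨_, ⟨x, rfl⟩, Sym2.mem_mk_left _ _⟩⟩
  · rintro _ ⟨x, rfl⟩
    exact hg.2 x
  · rintro _ ⟨x, rfl⟩ _ ⟨y, rfl⟩ hne z hzx hzy
    exact hne ((hmem x z hzx).trans (hmem y z hzy).symm)

/-- If `q 0` is matched out of the quadruple, the three vertices left cannot be matched among
themselves, and only `q 1` can leave. -/
theorem leaves_quadruple {q : Fin 4 → V} (hq : Function.Injective q)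
    (hq2 : ∀ y, G.Adj (q 2) y → y ∈ Set.range q) (hq3 : ∀ y, G.Adj (q 3) y → y ∈ Set.range q)
    (h0 : g (q 0) ∉ Set.range q) : g (q 1) ∉ Set.range q ∧ g (q 2) = q 3 := by
  have hinv := hg.1
  have hne := hg.apply_ne_self
  have hout : ∀ t, g (q t) ≠ q 0 := fun t h => h0 ⟨t, (hg.apply_eq_of_apply_eq h).symm⟩
  have h23 : g (q 2) = q 3 := by
    obtain ⟨t, ht⟩ := hq2 _ (hg.2 (q 2))
    obtain ⟨s, hs⟩ := hq3 _ (hg.2 (q 3))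
    fin_cases t <;> fin_cases s <;> grind [Function.Injective, Function.Involutive]
  refine ⟨?_, h23⟩
  rintro ⟨t, ht⟩
  fin_cases t <;> grind [Function.Injective, Function.Involutive]

end IsMatchingInvolution

def Iso.matchingInvolutionEquiv (e : G ≃g H) :
    {g // G.IsMatchingInvolution g} ≃ {g // H.IsMatchingInvolution g} where
  toFun g := ⟨e ∘ g.1 ∘ e.symm, g.2.map_iso e⟩
  invFun g := ⟨e.symm ∘ g.1 ∘ e, g.2.map_iso e.symm⟩
  left_inv g := by ext; simp
  right_inv g := by ext; simp

theorem card_isMatchingInvolution_top_fin_four :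
    Nat.card {σ : Fin 4 → Fin 4 // (⊤ : SimpleGraph (Fin 4)).IsMatchingInvolution σ} = 3 := by
  simp only [IsMatchingInvolution, Function.Involutive, top_adj]
  rw [Nat.card_eq_fintype_card]
  decide

end SimpleGraph

namespace IsPerfectMatchingSet

variable {V : Type*} {G : SimpleGraph V} {M : Set (Sym2 V)} (h : IsPerfectMatchingSet G M)
include h

theorem existsUnique_mem (x : V) : ∃! y, s(x, y) ∈ M := by
  obtain ⟨e, he, hx⟩ := h.2.2 x
  obtain ⟨y, rfl⟩ := Sym2.mem_iff_exists.1 hx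
  refine ⟨y, he, fun y' hy' => by_contra fun hne => ?_⟩
  exact h.2.1 _ hy' _ he (mt Sym2.congr_right.1 hne) x (Sym2.mem_mk_left _ _)
    (Sym2.mem_mk_left _ _)

noncomputable def partner (x : V) : V := (h.existsUnique_mem x).choose

theorem mk_partner_mem (x : V) : s(x, h.partner x) ∈ M := (h.existsUnique_mem x).choose_spec.1

theorem partner_eq_of_mem {x y : V} (hxy : s(x, y) ∈ M) : h.partner x = y :=
  ((h.existsUnique_mem x).choose_spec.2 y hxy).symm

theorem isMatchingInvolution_partner : G.IsMatchingInvolution h.partner :=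
  ⟨fun x => h.partner_eq_of_mem (Sym2.eq_swap ▸ h.mk_partner_mem x),
    fun x => h.1 (h.mk_partner_mem x)⟩

theorem eq_range_partner : M = Set.range fun x => s(x, h.partner x) := by
  ext e
  induction e using Sym2.ind with
  | _ x y =>
    refine ⟨fun hxy => ⟨x, by simp only [h.partner_eq_of_mem hxy]⟩, ?_⟩
    rintro ⟨z, hz⟩
    exact hz ▸ h.mk_partner_mem z

end IsPerfectMatchingSet

noncomputable def SimpleGraph.perfectMatchingSetEquiv {V : Type*} (G : SimpleGraph V) :
    {M // IsPerfectMatchingSet G M} ≃ {g // G.IsMatchingInvolution g} where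
  toFun M := ⟨M.2.partner, M.2.isMatchingInvolution_partner⟩
  invFun g := ⟨_, g.2.isPerfectMatchingSet_range⟩
  left_inv M := Subtype.ext M.2.eq_range_partner.symm
  right_inv g := Subtype.ext <| funext fun x =>
    g.2.isPerfectMatchingSet_range.partner_eq_of_mem ⟨x, rfl⟩

section FinSuccArith

variable {n : ℕ}

theorem Fin.eq_add_one_of_val_add_one_eq {i j : Fin (n + 1)} (h : (i : ℕ) + 1 = j) :
    i ≠ Fin.last n ∧ j = i + 1 := by
  have hi : i < Fin.last n := by rw [Fin.lt_def, Fin.val_last]; omega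
  exact ⟨hi.ne, Fin.ext (by rw [Fin.val_add_one_of_lt hi, h])⟩

theorem Fin.add_one_eq_zero_iff_eq_last {i : Fin (n + 1)} : i + 1 = 0 ↔ i = Fin.last n := by
  rw [← Fin.last_add_one n, add_left_inj]

theorem Fin.sub_one_eq_last_iff {i : Fin (n + 1)} : i - 1 = Fin.last n ↔ i = 0 := by
  rw [sub_eq_iff_eq_add, Fin.last_add_one]

end FinSuccArith

section Collar

variable {ℓ : ℕ}

@[simp]
theorem collar_adj_inl_inl (s t : Fin 2) : ¬(collar ℓ).Adj (.inl s) (.inl t) := by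
  simp [collar]

@[simp]
theorem collar_adj_inl_inr (s : Fin 2) (j : Fin ℓ) (t : Fin 4) :
    (collar ℓ).Adj (.inl s) (.inr (j, t)) ↔
      s = 0 ∧ (j : ℕ) = 0 ∧ t = 0 ∨ s = 1 ∧ (j : ℕ) = ℓ - 1 ∧ t = 1 := by
  simp only [collar, fromRel_adj]
  aesop

@[simp]
theorem collar_adj_inr_inl (s : Fin 2) (j : Fin ℓ) (t : Fin 4) :
    (collar ℓ).Adj (.inr (j, t)) (.inl s) ↔
      s = 0 ∧ (j : ℕ) = 0 ∧ t = 0 ∨ s = 1 ∧ (j : ℕ) = ℓ - 1 ∧ t = 1 := by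
  rw [adj_comm, collar_adj_inl_inr]

@[simp]
theorem collar_adj_inr_inr (i j : Fin ℓ) (s t : Fin 4) :
    (collar ℓ).Adj (.inr (i, s)) (.inr (j, t)) ↔
      i = j ∧ s ≠ t ∨ (i : ℕ) + 1 = j ∧ s = 1 ∧ t = 0 ∨ (j : ℕ) + 1 = i ∧ s = 0 ∧ t = 1 := by
  have hij : (i : ℕ) + 1 = j → i ≠ j := by rintro h rfl; omega
  have hji : (j : ℕ) + 1 = i → i ≠ j := by rintro h rfl; omega
  simp only [collar, fromRel_adj]
  aesop

theorem collar_mem_block_of_adj {i : Fin ℓ} {t : Fin 4} (ht : 2 ≤ t) {y}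
    (h : (collar ℓ).Adj (.inr (i, t)) y) : y ∈ Set.range fun s => .inr (i, s) := by
  have h0 : t ≠ 0 := by rintro rfl; exact absurd ht (by decide)
  have h1 : t ≠ 1 := by rintro rfl; exact absurd ht (by decide)
  rcases y with s | ⟨j, s⟩ <;> simp_all

theorem collar_leaves_quadruple {g : Fin 2 ⊕ (Fin ℓ × Fin 4) → Fin 2 ⊕ (Fin ℓ × Fin 4)}
    (hg : (collar ℓ).IsMatchingInvolution g) (i : Fin ℓ)
    (h : g (.inr (i, 0)) ∉ Set.range fun t => .inr (i, t)) :
    g (.inr (i, 1)) ∉ (Set.range fun t => .inr (i, t)) ∧ g (.inr (i, 2)) = .inr (i, 3) :=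
  hg.leaves_quadruple (q := fun t => .inr (i, t))
    (Sum.inr_injective.comp (Prod.mk_right_injective i))
    (fun _ => collar_mem_block_of_adj (by decide)) (fun _ => collar_mem_block_of_adj (by decide)) h

theorem not_exists_isPerfectMatchingSet_collar_induce_ne (s : Fin 2) :
    ¬ ∃ M, IsPerfectMatchingSet ((collar ℓ).induce {x | x ≠ .inl s}) M := by
  rintro ⟨M, hM⟩
  have := hM.isMatchingInvolution_partner.even_card
  rw [Set.card_ne_eq, Fintype.card_sum, Fintype.card_prod, Fintype.card_fin, Fintype.card_fin,
    Fintype.card_fin] at this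
  obtain ⟨k, hk⟩ := this
  omega

end Collar

section CollarMatching

variable {n : ℕ} {i : Fin (n + 1)} {y : Fin 2 ⊕ (Fin (n + 1) × Fin 4)}

theorem collar_adj_inl_zero_iff : (collar (n + 1)).Adj (.inl 0) y ↔ y = .inr (0, 0) := by
  rcases y with s | ⟨j, t⟩ <;> simp

theorem collar_adj_inl_one_iff : (collar (n + 1)).Adj (.inl 1) y ↔ y = .inr (Fin.last n, 1) := by
  rcases y with s | ⟨j, t⟩ <;> simp [Fin.ext_iff (b := Fin.last n)]

theorem collar_adj_inr_one_add_one (hi : i ≠ Fin.last n) :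
    (collar (n + 1)).Adj (.inr (i, 1)) (.inr (i + 1, 0)) := by
  simp [Fin.val_add_one_of_lt (Fin.lt_last_iff_ne_last.2 hi)]

theorem collar_adj_inr_zero_of_notMem (h : (collar (n + 1)).Adj (.inr (i, 0)) y)
    (hy : y ∉ Set.range fun t => .inr (i, t)) :
    i = 0 ∧ y = .inl 0 ∨ i ≠ 0 ∧ y = .inr (i - 1, 1) := by
  rcases y with s | ⟨j, t⟩
  · simp_all
  · simp only [collar_adj_inr_inr, Set.mem_range, Sum.inr.injEq, Prod.mk.injEq, not_exists,
      not_and] at h hy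
    obtain ⟨hj, rfl⟩ : (j : ℕ) + 1 = i ∧ t = 1 := by grind
    have hi : i ≠ 0 := by rintro rfl; simp at hj
    obtain ⟨-, rfl⟩ := Fin.eq_add_one_of_val_add_one_eq hj
    exact Or.inr ⟨hi, by simp⟩

theorem collar_adj_inr_one_of_notMem (h : (collar (n + 1)).Adj (.inr (i, 1)) y)
    (hy : y ∉ Set.range fun t => .inr (i, t)) :
    i = Fin.last n ∧ y = .inl 1 ∨ i ≠ Fin.last n ∧ y = .inr (i + 1, 0) := by
  rcases y with s | ⟨j, t⟩
  · simp_all [Fin.ext_iff (b := Fin.last n)]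
  · simp only [collar_adj_inr_inr, Set.mem_range, Sum.inr.injEq, Prod.mk.injEq, not_exists,
      not_and] at h hy
    obtain ⟨hj, rfl⟩ : (i : ℕ) + 1 = j ∧ t = 0 := by grind
    simp [Fin.eq_add_one_of_val_add_one_eq hj]

/-- The matching `{u a₁} ∪ {b_i a_{i+1}} ∪ {b_ℓ v} ∪ {c_i d_i}` of `X_{n+1}`. -/
def collarMatching (n : ℕ) : Fin 2 ⊕ (Fin (n + 1) × Fin 4) → Fin 2 ⊕ (Fin (n + 1) × Fin 4)
  | .inl 0 => .inr (0, 0)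
  | .inl 1 => .inr (Fin.last n, 1)
  | .inr (i, 0) => if i = 0 then .inl 0 else .inr (i - 1, 1)
  | .inr (i, 1) => if i = Fin.last n then .inl 1 else .inr (i + 1, 0)
  | .inr (i, 2) => .inr (i, 3)
  | .inr (i, 3) => .inr (i, 2)

theorem isMatchingInvolution_collarMatching (n : ℕ) :
    (collar (n + 1)).IsMatchingInvolution (collarMatching n) := by
  constructor
  · rintro (s | ⟨i, t⟩)
    · fin_cases s <;> simp [collarMatching]
    · fin_cases t <;> simp only [collarMatching, Fin.isValue, Fin.zero_eta, Fin.mk_one,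
        Fin.reduceFinMk] <;> split_ifs <;>
        simp_all [Fin.add_one_eq_zero_iff_eq_last, Fin.sub_one_eq_last_iff]
  · rintro (s | ⟨i, t⟩)
    · fin_cases s <;> simp [collarMatching]
    · fin_cases t
      · by_cases hi : i = 0
        · simp [collarMatching, hi]
        · simp only [collarMatching, hi, if_false]
          simpa using (collar_adj_inr_one_add_one (mt Fin.sub_one_eq_last_iff.1 hi)).symm
      · by_cases hi : i = Fin.last n
        · simp [collarMatching, hi]
        · simp only [collarMatching, hi, if_false]
          exact collar_adj_inr_one_add_one hi
      all_goals simp [collarMatching]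

variable {g : Fin 2 ⊕ (Fin (n + 1) × Fin 4) → Fin 2 ⊕ (Fin (n + 1) × Fin 4)}

theorem collar_apply_inr_zero_notMem (hg : (collar (n + 1)).IsMatchingInvolution g)
    (i : Fin (n + 1)) : g (.inr (i, 0)) ∉ Set.range fun t => .inr (i, t) := by
  induction i using Fin.induction with
  | zero =>
    rw [hg.apply_eq_of_apply_eq (collar_adj_inl_zero_iff.1 (hg.2 (.inl 0)))]
    simp
  | succ k ih =>
    rcases collar_adj_inr_one_of_notMem (hg.2 _) (collar_leaves_quadruple hg _ ih).1 with
      ⟨hk, -⟩ | ⟨-, h⟩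
    · exact absurd hk (Fin.castSucc_ne_last k)
    · rw [Fin.coeSucc_eq_succ] at h
      rw [hg.apply_eq_of_apply_eq h]
      simp [Fin.castSucc_lt_succ.ne']

theorem eq_collarMatching (hg : (collar (n + 1)).IsMatchingInvolution g) :
    g = collarMatching n := by
  funext x
  rcases x with s | ⟨i, t⟩
  · fin_cases s
    · simpa [collarMatching] using collar_adj_inl_zero_iff.1 (hg.2 (.inl 0))
    · simpa [collarMatching] using collar_adj_inl_one_iff.1 (hg.2 (.inl 1))
  · have ha := collar_apply_inr_zero_notMem hg i
    obtain ⟨hb, hc⟩ := collar_leaves_quadruple hg i ha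
    fin_cases t
    · rcases collar_adj_inr_zero_of_notMem (hg.2 _) ha with ⟨rfl, h⟩ | ⟨hi, h⟩ <;>
        simp [collarMatching, *]
    · rcases collar_adj_inr_one_of_notMem (hg.2 _) hb with ⟨rfl, h⟩ | ⟨hi, h⟩ <;>
        simp [collarMatching, *]
    · simpa [collarMatching] using hc
    · simpa [collarMatching] using hg.apply_eq_of_apply_eq hc

end CollarMatching

/-- `X_ℓ − {u, v}`, on the vertex type `Fin ℓ × Fin 4` rather than a subtype. -/
def collarCore (ℓ : ℕ) : SimpleGraph (Fin ℓ × Fin 4) := (collar ℓ).comap Sum.inr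

noncomputable def collarCoreIso (ℓ : ℕ) :
    collarCore ℓ ≃g (collar ℓ).induce {x | x ≠ .inl 0 ∧ x ≠ .inl 1} where
  toEquiv := Equiv.ofBijective (fun p => ⟨.inr p, by simp⟩) <| by
    refine ⟨fun p q h => Sum.inr_injective (congrArg Subtype.val h), ?_⟩
    rintro ⟨s | p, hs⟩
    · fin_cases s <;> simp at hs
    · exact ⟨p, rfl⟩
  map_rel_iff' := Iff.rfl

section CollarCore

variable {ℓ n : ℕ}

theorem collarCore_adj_iff {p q : Fin ℓ × Fin 4} :
    (collarCore ℓ).Adj p q ↔ (collar ℓ).Adj (.inr p) (.inr q) := Iff.rfl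

theorem collarCore_fst_eq_of_adj {i : Fin ℓ} {t : Fin 4} (ht : 2 ≤ t) {p : Fin ℓ × Fin 4}
    (h : (collarCore ℓ).Adj (i, t) p) : p.1 = i := by
  obtain ⟨s, hs⟩ := collar_mem_block_of_adj ht h
  exact congrArg Prod.fst (Sum.inr_injective hs).symm

theorem collarCore_leaves_quadruple {g : Fin ℓ × Fin 4 → Fin ℓ × Fin 4}
    (hg : (collarCore ℓ).IsMatchingInvolution g) (i : Fin ℓ) (h : (g (i, 0)).1 ≠ i) :
    (g (i, 1)).1 ≠ i := by
  have hmem : ∀ p : Fin ℓ × Fin 4, p ∈ Set.range (Prod.mk i) ↔ p.1 = i :=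
    fun p => ⟨by rintro ⟨t, rfl⟩; rfl, fun h => ⟨p.2, by rw [← h]⟩⟩
  have := hg.leaves_quadruple (Prod.mk_right_injective i)
    (fun p hp => (hmem p).2 (collarCore_fst_eq_of_adj (by decide) hp))
    (fun p hp => (hmem p).2 (collarCore_fst_eq_of_adj (by decide) hp)) (by rwa [hmem])
  rw [hmem] at this
  exact this.1

theorem inr_notMem_range_of_fst_ne {i : Fin ℓ} {p : Fin ℓ × Fin 4} (h : p.1 ≠ i) :
    (.inr p : Fin 2 ⊕ (Fin ℓ × Fin 4)) ∉ Set.range fun t => .inr (i, t) := by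
  rintro ⟨t, ht⟩
  exact h (congrArg Prod.fst (Sum.inr_injective ht)).symm

variable {g : Fin (n + 1) × Fin 4 → Fin (n + 1) × Fin 4}

theorem collarCore_fst_apply_one (hg : (collarCore (n + 1)).IsMatchingInvolution g)
    (i : Fin (n + 1)) : (g (i, 1)).1 = i := by
  induction i using Fin.reverseInduction with
  | last =>
    by_contra h
    rcases collar_adj_inr_one_of_notMem (hg.2 _) (inr_notMem_range_of_fst_ne h) with
      ⟨-, h'⟩ | ⟨h', -⟩
    · exact Sum.inr_ne_inl h'
    · exact h' rfl
  | cast k ih =>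
    have h0 : (g (k.succ, 0)).1 = k.succ := by_contra fun h => collarCore_leaves_quadruple hg _ h ih
    by_contra h
    rcases collar_adj_inr_one_of_notMem (hg.2 _) (inr_notMem_range_of_fst_ne h) with
      ⟨hk, -⟩ | ⟨-, he⟩
    · exact Fin.castSucc_ne_last k hk
    · rw [Fin.coeSucc_eq_succ] at he
      rw [hg.apply_eq_of_apply_eq (Sum.inr_injective he)] at h0
      exact Fin.castSucc_lt_succ.ne h0

theorem collarCore_fst_apply (hg : (collarCore (n + 1)).IsMatchingInvolution g)
    (p : Fin (n + 1) × Fin 4) : (g p).1 = p.1 := by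
  obtain ⟨i, t⟩ := p
  fin_cases t
  · exact by_contra fun h => collarCore_leaves_quadruple hg i h (collarCore_fst_apply_one hg i)
  · exact collarCore_fst_apply_one hg i
  · exact collarCore_fst_eq_of_adj (by decide) (hg.2 _)
  · exact collarCore_fst_eq_of_adj (by decide) (hg.2 _)

def collarCoreMatchingEquiv (n : ℕ) :
    {g // (collarCore (n + 1)).IsMatchingInvolution g} ≃
      (Fin (n + 1) → {σ : Fin 4 → Fin 4 // (⊤ : SimpleGraph (Fin 4)).IsMatchingInvolution σ}) where
  toFun g i := ⟨fun t => (g.1 (i, t)).2, by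
    have h : ∀ t, g.1 (i, t) = (i, (g.1 (i, t)).2) := fun t =>
      Prod.ext (collarCore_fst_apply g.2 (i, t)) rfl
    refine ⟨fun t => ?_, fun t ht => g.2.apply_ne_self (i, t) ?_⟩
    · change (g.1 (i, (g.1 (i, t)).2)).2 = t
      rw [← h, g.2.1]
    · rw [h t]
      exact congrArg (Prod.mk i) ht.symm⟩
  invFun σ := ⟨fun p => (p.1, (σ p.1).1 p.2), fun p => by simp [(σ p.1).2.1 p.2],
    fun ⟨i, t⟩ => by simpa [collarCore_adj_iff, eq_comm] using (σ i).2.2 t⟩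
  left_inv g := Subtype.ext <| funext fun p => Prod.ext (collarCore_fst_apply g.2 p).symm rfl
  right_inv σ := rfl

end CollarCore

/-- For `ℓ ≥ 1` the collar `X_ℓ` has exactly one perfect matching; deleting one of its end
vertices leaves no perfect matching; deleting both end vertices leaves exactly `3^ℓ`
perfect matchings. -/
theorem collar_perfect_matchings (ℓ : ℕ) (hℓ : 1 ≤ ℓ) :
    Nat.card {M : Set (Sym2 (Fin 2 ⊕ (Fin ℓ × Fin 4))) //
        IsPerfectMatchingSet (collar ℓ) M} = 1 ∧
    (¬ ∃ M, IsPerfectMatchingSet ((collar ℓ).induce {x | x ≠ Sum.inl 0}) M) ∧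
    (¬ ∃ M, IsPerfectMatchingSet ((collar ℓ).induce {x | x ≠ Sum.inl 1}) M) ∧
    Nat.card {M : Set (Sym2 ({x : Fin 2 ⊕ (Fin ℓ × Fin 4) // x ≠ Sum.inl 0 ∧ x ≠ Sum.inl 1})) //
        IsPerfectMatchingSet ((collar ℓ).induce {x | x ≠ Sum.inl 0 ∧ x ≠ Sum.inl 1}) M} =
      3 ^ ℓ := by
  obtain ⟨n, rfl⟩ := Nat.exists_eq_add_of_le' hℓ
  refine ⟨?_, not_exists_isPerfectMatchingSet_collar_induce_ne 0,
    not_exists_isPerfectMatchingSet_collar_induce_ne 1, ?_⟩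
  · rw [Nat.card_congr (perfectMatchingSetEquiv _), Nat.card_eq_one_iff_unique]
    exact ⟨⟨fun g g' => Subtype.ext ((eq_collarMatching g.2).trans (eq_collarMatching g'.2).symm)⟩,
      ⟨⟨_, isMatchingInvolution_collarMatching n⟩⟩⟩
  · refine (Nat.card_congr ((perfectMatchingSetEquiv _).trans
      ((collarCoreIso _).matchingInvolutionEquiv.symm.trans (collarCoreMatchingEquiv n)))).trans ?_
    rw [Nat.card_fun, card_isMatchingInvolution_top_fin_four, Nat.card_eq_fintype_card,
      Fintype.card_fin]
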